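/- On the null cone {X ∈ Λ²T : X∧X = 0} with the generators F^α_β = 2X^{αγ}∂_{βγ}, the contracted tensor product identity 2·F^α_ρ ⊗ F^ρ_β = F^ρ_ρ ⊗ F^α_β holds. -/
import Mathlib


open Finset

/-- The value of the `gl(T)`-generator vector field `F^α_β = 2X^{αγ}∂_{βγ}` on the
coordinates of `Λ²T`: `(F^α_β)·dX^{γδ} = δ^γ_β X^{αδ} − δ^δ_β X^{αγ}`. -/
noncomputable def Fdir (X : Fin 4 → Fin 4 → ℂ) (α β : Fin 4) :
    Fin 4 → Fin 4 → ℂ :=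
  fun γ δ => (if γ = β then X α δ else 0) - (if δ = β then X α γ else 0)

set_option maxHeartbeats 3200000 in
lemma plucker (X : Fin 4 → Fin 4 → ℂ) (hskew : ∀ a b, X b a = -X a b)
    (hquad : X 0 1 * X 2 3 + X 0 2 * X 3 1 + X 0 3 * X 1 2 = 0) :
    ∀ a b c d, X a b * X c d - X a c * X b d + X a d * X b c = 0 := by
  have hd : ∀ i, X i i = 0 := fun i => by
    have h := hskew i i; linear_combination (1/2 : ℂ) * h
  intro a b c d
  fin_cases a <;> fin_cases b <;> fin_cases c <;> fin_cases d <;>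
    simp only [show (⟨0, by omega⟩ : Fin 4) = 0 from rfl,
      show (⟨1, by omega⟩ : Fin 4) = 1 from rfl,
      show (⟨2, by omega⟩ : Fin 4) = 2 from rfl,
      show (⟨3, by omega⟩ : Fin 4) = 3 from rfl,
      hd, hskew 0 1, hskew 0 2, hskew 0 3, hskew 1 2, hskew 1 3, hskew 2 3] <;>
    (first
      | ring1
      | linear_combination hquad - X 0 2 * hskew 1 3
      | linear_combination -hquad + X 0 2 * hskew 1 3)

lemma sum1 (X : Fin 4 → Fin 4 → ℂ) (α β γ δ ε ζ : Fin 4) :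
    ∑ ρ, Fdir X α ρ γ δ * Fdir X ρ β ε ζ =
      X α δ * Fdir X γ β ε ζ - X α γ * Fdir X δ β ε ζ := by
  simp only [Fdir, Fin.sum_univ_four]
  fin_cases γ <;> fin_cases δ <;> simp <;> ring

lemma sum2 (X : Fin 4 → Fin 4 → ℂ) (hskew : ∀ a b, X b a = -X a b) (γ δ : Fin 4) :
    ∑ ρ, Fdir X ρ ρ γ δ = 2 * X γ δ := by
  have hd : ∀ i, X i i = 0 := fun i => by
    have h := hskew i i; linear_combination (1/2 : ℂ) * h
  simp only [Fdir, Fin.sum_univ_four]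
  fin_cases γ <;> fin_cases δ <;>
    simp only [show (⟨0, by omega⟩ : Fin 4) = 0 from rfl,
      show (⟨1, by omega⟩ : Fin 4) = 1 from rfl,
      show (⟨2, by omega⟩ : Fin 4) = 2 from rfl,
      show (⟨3, by omega⟩ : Fin 4) = 3 from rfl] <;>
    simp [hd, hskew 0 1, hskew 0 2, hskew 0 3, hskew 1 2, hskew 1 3, hskew 2 3] <;>
    ring

/-- On the null cone `{X ∈ Λ²T : X∧X = 0}` (with `X` skew), the contracted tensor
product identity `2·F^α_ρ ⊗ F^ρ_β = F^ρ_ρ ⊗ F^α_β` holds, componentwise on the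
coordinate components of the vector fields. -/
theorem stmt7 (X : Fin 4 → Fin 4 → ℂ) (hskew : ∀ a b, X b a = -X a b)
    (hquad : X 0 1 * X 2 3 + X 0 2 * X 3 1 + X 0 3 * X 1 2 = 0) :
    ∀ α β γ δ ε ζ : Fin 4,
      2 * ∑ ρ, Fdir X α ρ γ δ * Fdir X ρ β ε ζ =
        (∑ ρ, Fdir X ρ ρ γ δ * Fdir X α β ε ζ) := by
  intro α β γ δ ε ζ
  have hp := plucker X hskew hquad
  rw [sum1, ← Finset.sum_mul, sum2 X hskew]
  simp only [Fdir]
  split_ifs <;>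
    (first
      | ring1
      | linear_combination (-2 : ℂ) * hp α γ δ ζ
      | linear_combination (2 : ℂ) * hp α γ δ ε
      | linear_combination (2 : ℂ) * hp α γ δ ε + (-2 : ℂ) * hp α γ δ ζ)
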